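/- arXiv:1511.02273 — 2 statements merged into one kernel-verified Lean document; each statement's English description precedes it below -/
import Mathlib

section
/- Let a < b be reals, L = b − a, and ε > 0. Let φ : [0,1] → [a,b] be nondecreasing with φ(0) = a and φ(1) = b. Then the sum over all halting dyadic nodes (ℓ, j) of ℓ·2^{−ℓ} is at most 3 + log₂⁺(L/(2ε)), where log₂⁺(t) = max{0, log₂ t}. (This is the expected number of random bits used by the bisection algorithm, Theorem 1(ii).) -/
open scoped ENNReal

/-- The length of the subinterval associated with the dyadic node `(ℓ, j)` by the
quantile function `φ`: `λ(ℓ,j) = φ((j+1)·2^{-ℓ}) - φ(j·2^{-ℓ})`. -/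
noncomputable def lamBis (φ : ℝ → ℝ) (ℓ j : ℕ) : ℝ :=
  φ (((j : ℝ) + 1) / 2 ^ ℓ) - φ ((j : ℝ) / 2 ^ ℓ)

/-- The dyadic node `(ℓ, j)` (with `j < 2^ℓ`) is halting if its interval has length
at most `2ε` while every strict ancestor `(ℓ', ⌊j·2^{ℓ'-ℓ}⌋)` has length `> 2ε`. -/
def HaltingNode (φ : ℝ → ℝ) (ε : ℝ) (ℓ j : ℕ) : Prop :=
  j < 2 ^ ℓ ∧ lamBis φ ℓ j ≤ 2 * ε ∧
    ∀ ℓ' < ℓ, 2 * ε < lamBis φ ℓ' (j / 2 ^ (ℓ - ℓ'))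

/-!
Write `ℓ = ∑_{ℓ' < ℓ} 1`, so that the sum becomes `∑_{ℓ'}` of the mass `2^{-ℓ}` of the halting
nodes deeper than `ℓ'`. The dyadic intervals of halting nodes are disjoint, and one deeper than `ℓ'`
lies in the interval of its level-`ℓ'` ancestor, which is wider than `2ε`. The widths at level `ℓ'`
telescope to `b - a`, so at most `(b - a)/(2ε)` of them exceed `2ε`, and the `ℓ'`-th term is at
most `min(1, (b - a)/(2ε) · 2^{-ℓ'})`. The first `⌈log₂⁺((b - a)/(2ε))⌉` terms are thus at most `1`
each, and the remaining ones are dominated by a geometric series with sum `2`.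
-/

open MeasureTheory Finset Function

def dyadicIco (ℓ j : ℕ) : Set ℝ := Set.Ico ((j : ℝ) / 2 ^ ℓ) ((j + 1) / 2 ^ ℓ)

lemma mem_dyadicIco {ℓ j : ℕ} {x : ℝ} : x ∈ dyadicIco ℓ j ↔ 0 ≤ x ∧ ⌊x * 2 ^ ℓ⌋₊ = j := by
  have h2 : (0 : ℝ) < 2 ^ ℓ := by positivity
  rw [dyadicIco, Set.mem_Ico, div_le_iff₀ h2, lt_div_iff₀ h2]
  constructor
  · rintro ⟨hj, hj1⟩
    have hx : 0 ≤ x * 2 ^ ℓ := (Nat.cast_nonneg j).trans hj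
    exact ⟨nonneg_of_mul_nonneg_left hx h2, (Nat.floor_eq_iff hx).2 ⟨hj, hj1⟩⟩
  · rintro ⟨hx, rfl⟩
    exact (Nat.floor_eq_iff (by positivity)).1 rfl

lemma Nat.floor_mul_two_pow_eq_div (x : ℝ) {ℓ' ℓ : ℕ} (h : ℓ' ≤ ℓ) :
    ⌊x * 2 ^ ℓ'⌋₊ = ⌊x * 2 ^ ℓ⌋₊ / 2 ^ (ℓ - ℓ') := by
  rw [← Nat.floor_div_natCast, ← pow_sub_mul_pow 2 h]
  push_cast
  field_simp

lemma dyadicIco_subset_ancestor {ℓ' ℓ : ℕ} (h : ℓ' ≤ ℓ) (j : ℕ) :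
    dyadicIco ℓ j ⊆ dyadicIco ℓ' (j / 2 ^ (ℓ - ℓ')) := by
  intro x hx
  rw [mem_dyadicIco] at hx ⊢
  exact ⟨hx.1, by rw [Nat.floor_mul_two_pow_eq_div x h, hx.2]⟩

lemma volume_dyadicIco (ℓ j : ℕ) : volume (dyadicIco ℓ j) = 1 / 2 ^ ℓ := by
  rw [dyadicIco, Real.volume_Ico, ← sub_div, add_sub_cancel_left, ENNReal.ofReal_div_of_pos
    (by positivity), ENNReal.ofReal_one, ENNReal.ofReal_pow zero_le_two, ENNReal.ofReal_ofNat]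

lemma dyadicIco_subset_Ico_zero_one {ℓ j : ℕ} (h : j < 2 ^ ℓ) :
    dyadicIco ℓ j ⊆ Set.Ico 0 1 := by
  refine Set.Ico_subset_Ico (by positivity) ((div_le_one (by positivity)).2 ?_)
  exact_mod_cast h

lemma volume_biUnion_dyadicIco_le {ℓ : ℕ} {s : Finset ℕ} (hs : s ⊆ range (2 ^ ℓ)) :
    volume (⋃ k ∈ s, dyadicIco ℓ k) ≤ min 1 ((#s : ℝ≥0∞) / 2 ^ ℓ) := by
  refine le_min ?_ ?_
  · calc volume (⋃ k ∈ s, dyadicIco ℓ k) ≤ volume (Set.Ico (0 : ℝ) 1) :=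
          measure_mono <| Set.iUnion₂_subset fun k hk ↦
            dyadicIco_subset_Ico_zero_one (mem_range.1 (hs hk))
      _ = 1 := by simp
  · calc volume (⋃ k ∈ s, dyadicIco ℓ k) ≤ ∑ k ∈ s, volume (dyadicIco ℓ k) :=
          measure_biUnion_finset_le s _
      _ = #s / 2 ^ ℓ := by simp [volume_dyadicIco, div_eq_mul_inv]

lemma HaltingNode.eq_of_mem_dyadicIco {φ : ℝ → ℝ} {ε x : ℝ} {ℓ₁ j₁ ℓ₂ j₂ : ℕ}
    (h₁ : HaltingNode φ ε ℓ₁ j₁) (h₂ : HaltingNode φ ε ℓ₂ j₂)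
    (hx₁ : x ∈ dyadicIco ℓ₁ j₁) (hx₂ : x ∈ dyadicIco ℓ₂ j₂) : (ℓ₁, j₁) = (ℓ₂, j₂) := by
  wlog hle : ℓ₁ ≤ ℓ₂ generalizing ℓ₁ j₁ ℓ₂ j₂
  · exact (this h₂ h₁ hx₂ hx₁ (by omega)).symm
  rw [mem_dyadicIco] at hx₁ hx₂
  have hanc : j₂ / 2 ^ (ℓ₂ - ℓ₁) = j₁ := by
    rw [← hx₁.2, ← hx₂.2, Nat.floor_mul_two_pow_eq_div x hle]
  obtain rfl | hlt := hle.eq_or_lt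
  · simpa using hanc.symm
  · have := h₂.2.2 ℓ₁ hlt
    rw [hanc] at this
    exact absurd h₁.2.1 this.not_ge

lemma pairwise_disjoint_dyadicIco_haltingNode (φ : ℝ → ℝ) (ε : ℝ) :
    Pairwise (Disjoint on (fun u : {q : ℕ × ℕ // HaltingNode φ ε q.1 q.2} ↦
      dyadicIco u.1.1 u.1.2)) :=
  fun u v huv ↦ Set.disjoint_left.2 fun _ hu hv ↦
    huv (Subtype.ext (u.2.eq_of_mem_dyadicIco v.2 hu hv))

noncomputable def wideNodes (φ : ℝ → ℝ) (ε : ℝ) (ℓ : ℕ) : Finset ℕ :=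
  (range (2 ^ ℓ)).filter fun k ↦ 2 * ε < lamBis φ ℓ k

lemma sum_range_lamBis (φ : ℝ → ℝ) (ℓ : ℕ) :
    ∑ k ∈ range (2 ^ ℓ), lamBis φ ℓ k = φ 1 - φ 0 := by
  have := sum_range_sub (fun k : ℕ ↦ φ (k / 2 ^ ℓ)) (2 ^ ℓ)
  simp_all [lamBis]

lemma lamBis_nonneg {φ : ℝ → ℝ} (hφ : MonotoneOn φ (Set.Icc 0 1)) {ℓ k : ℕ}
    (hk : k < 2 ^ ℓ) : 0 ≤ lamBis φ ℓ k := by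
  have h2 : (0 : ℝ) < 2 ^ ℓ := by positivity
  have hk' : (k : ℝ) + 1 ≤ 2 ^ ℓ := by exact_mod_cast hk
  exact sub_nonneg.2 <| hφ ⟨by positivity, div_le_one_of_le₀ (by linarith) h2.le⟩
    ⟨by positivity, div_le_one_of_le₀ hk' h2.le⟩ (by gcongr; linarith)

lemma card_wideNodes_mul_le {φ : ℝ → ℝ} (hφ : MonotoneOn φ (Set.Icc 0 1)) (ε : ℝ) (ℓ : ℕ) :
    #(wideNodes φ ε ℓ) * (2 * ε) ≤ φ 1 - φ 0 :=
  calc #(wideNodes φ ε ℓ) * (2 * ε) = ∑ _k ∈ wideNodes φ ε ℓ, 2 * ε := by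
        rw [sum_const, nsmul_eq_mul]
    _ ≤ ∑ k ∈ wideNodes φ ε ℓ, lamBis φ ℓ k := sum_le_sum fun k hk ↦ (mem_filter.1 hk).2.le
    _ ≤ ∑ k ∈ range (2 ^ ℓ), lamBis φ ℓ k :=
        sum_le_sum_of_subset_of_nonneg (filter_subset _ _)
          fun k hk _ ↦ lamBis_nonneg hφ (mem_range.1 hk)
    _ = φ 1 - φ 0 := sum_range_lamBis φ ℓ

lemma tsum_haltingNode_deeper_le_volume (φ : ℝ → ℝ) (ε : ℝ) (ℓ' : ℕ) :
    ∑' u : {q : ℕ × ℕ // HaltingNode φ ε q.1 q.2},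
        (if ℓ' < u.1.1 then 1 / 2 ^ u.1.1 else 0)
      ≤ volume (⋃ k ∈ wideNodes φ ε ℓ', dyadicIco ℓ' k) := by
  set F : {q : ℕ × ℕ // HaltingNode φ ε q.1 q.2} → Set ℝ :=
    fun u ↦ if ℓ' < u.1.1 then dyadicIco u.1.1 u.1.2 else ∅
  have hF : ∀ u, F u ⊆ dyadicIco u.1.1 u.1.2 := fun u ↦ by
    dsimp only [F]; split_ifs <;> simp
  calc ∑' u : {q : ℕ × ℕ // HaltingNode φ ε q.1 q.2}, (if ℓ' < u.1.1 then 1 / 2 ^ u.1.1 else 0)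
      = ∑' u, volume (F u) := tsum_congr fun u ↦ by
        dsimp only [F]; split_ifs <;> simp [volume_dyadicIco]
    _ ≤ volume (⋃ u, F u) :=
        tsum_meas_le_meas_iUnion_of_disjoint _
          (fun u ↦ by dsimp only [F]; split_ifs <;> simp [dyadicIco, measurableSet_Ico])
          fun u v huv ↦ (pairwise_disjoint_dyadicIco_haltingNode φ ε huv).mono (hF u) (hF v)
    _ ≤ volume (⋃ k ∈ wideNodes φ ε ℓ', dyadicIco ℓ' k) := by
        refine measure_mono (Set.iUnion_subset fun ⟨(ℓ, j), hj⟩ ↦ ?_)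
        dsimp only [F]
        split_ifs with hlt
        · refine (dyadicIco_subset_ancestor hlt.le j).trans (Set.subset_biUnion_of_mem ?_)
          refine mem_filter.2 ⟨mem_range.2 (Nat.div_lt_of_lt_mul ?_), hj.2.2 ℓ' hlt⟩
          rw [← pow_add, Nat.sub_add_cancel hlt.le]
          exact hj.1
        · exact Set.empty_subset _

lemma tsum_haltingNode_deeper_le {φ : ℝ → ℝ} (hφ : MonotoneOn φ (Set.Icc 0 1)) {ε : ℝ}
    (hε : 0 < ε) (ℓ' : ℕ) :
    ∑' u : {q : ℕ × ℕ // HaltingNode φ ε q.1 q.2},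
        (if ℓ' < u.1.1 then 1 / 2 ^ u.1.1 else 0)
      ≤ min 1 (ENNReal.ofReal ((φ 1 - φ 0) / (2 * ε)) / 2 ^ ℓ') := by
  have hcard : (#(wideNodes φ ε ℓ') : ℝ≥0∞) ≤ ENNReal.ofReal ((φ 1 - φ 0) / (2 * ε)) := by
    rw [← ENNReal.ofReal_natCast]
    exact ENNReal.ofReal_le_ofReal ((le_div_iff₀ (by positivity)).2 (card_wideNodes_mul_le hφ ε ℓ'))
  calc _ ≤ volume (⋃ k ∈ wideNodes φ ε ℓ', dyadicIco ℓ' k) :=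
        tsum_haltingNode_deeper_le_volume φ ε ℓ'
    _ ≤ min 1 ((#(wideNodes φ ε ℓ') : ℝ≥0∞) / 2 ^ ℓ') :=
        volume_biUnion_dyadicIco_le (filter_subset _ _)
    _ ≤ _ := by gcongr

lemma tsum_ite_lt (ℓ : ℕ) (c : ℝ≥0∞) : ∑' ℓ' : ℕ, (if ℓ' < ℓ then c else 0) = ℓ * c := by
  rw [tsum_eq_sum (s := range ℓ) fun n hn ↦ if_neg (by simpa using hn),
    sum_ite_of_true fun n hn ↦ mem_range.1 hn, sum_const, card_range, nsmul_eq_mul]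

lemma tsum_min_one_div_two_pow_le {c : ℝ≥0∞} {m : ℕ} (hc : c ≤ 2 ^ m) :
    ∑' ℓ : ℕ, min 1 (c / 2 ^ ℓ) ≤ m + 2 := by
  rw [← ENNReal.summable.sum_add_tsum_nat_add' (k := m)]
  gcongr
  · calc ∑ ℓ ∈ range m, min 1 (c / 2 ^ ℓ) ≤ ∑ _ℓ ∈ range m, 1 :=
          sum_le_sum fun _ _ ↦ min_le_left _ _
      _ = m := by simp
  · calc ∑' i, min 1 (c / 2 ^ (i + m)) ≤ ∑' i : ℕ, 2⁻¹ ^ i := ENNReal.tsum_le_tsum fun i ↦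
          calc min 1 (c / 2 ^ (i + m)) ≤ 2 ^ m / 2 ^ (i + m) := (min_le_right _ _).trans (by gcongr)
            _ = 2⁻¹ ^ i := by
              rw [pow_add, ENNReal.div_eq_inv_mul, ENNReal.mul_inv (by simp) (by simp), mul_assoc,
                ENNReal.inv_mul_cancel (by simp) (by simp), mul_one, ENNReal.inv_pow]
      _ = 2 := by rw [ENNReal.tsum_geometric, ENNReal.one_sub_inv_two, inv_inv]

lemma ofReal_le_two_pow_ceil_logb (C : ℝ) :
    ENNReal.ofReal C ≤ 2 ^ ⌈max 0 (Real.logb 2 C)⌉₊ := by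
  rcases le_or_gt C 0 with hC | hC
  · simp [ENNReal.ofReal_of_nonpos hC]
  rw [← ENNReal.ofReal_ofNat, ← ENNReal.ofReal_pow zero_le_two, ← Real.rpow_natCast]
  refine ENNReal.ofReal_le_ofReal ((Real.logb_le_iff_le_rpow one_lt_two hC).1 ?_)
  exact (le_max_right _ _).trans (Nat.le_ceil _)

theorem stmt0_general (a b ε : ℝ) (hε : 0 < ε)
    (φ : ℝ → ℝ) (hmono : MonotoneOn φ (Set.Icc 0 1))
    (hφ0 : φ 0 = a) (hφ1 : φ 1 = b) :
    ∑' u : {q : ℕ × ℕ // HaltingNode φ ε q.1 q.2}, ((u.1.1 : ℝ≥0∞) / 2 ^ u.1.1)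
      ≤ ENNReal.ofReal (3 + max 0 (Real.logb 2 ((b - a) / (2 * ε)))) := by
  set m := ⌈max 0 (Real.logb 2 ((b - a) / (2 * ε)))⌉₊
  have hm : (m : ℝ) < max 0 (Real.logb 2 ((b - a) / (2 * ε))) + 1 :=
    Nat.ceil_lt_add_one (le_max_left _ _)
  calc ∑' u : {q : ℕ × ℕ // HaltingNode φ ε q.1 q.2}, ((u.1.1 : ℝ≥0∞) / 2 ^ u.1.1)
      = ∑' ℓ' : ℕ, ∑' u : {q : ℕ × ℕ // HaltingNode φ ε q.1 q.2},
          (if ℓ' < u.1.1 then 1 / 2 ^ u.1.1 else 0) := by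
        rw [ENNReal.tsum_comm]
        exact tsum_congr fun u ↦ by rw [tsum_ite_lt, ← mul_div_assoc, mul_one]
    _ ≤ ∑' ℓ' : ℕ, min 1 (ENNReal.ofReal ((b - a) / (2 * ε)) / 2 ^ ℓ') := by
        rw [← hφ0, ← hφ1]
        exact ENNReal.tsum_le_tsum (tsum_haltingNode_deeper_le hmono hε)
    _ ≤ m + 2 := tsum_min_one_div_two_pow_le (ofReal_le_two_pow_ceil_logb _)
    _ ≤ ENNReal.ofReal (3 + max 0 (Real.logb 2 ((b - a) / (2 * ε)))) := by
        rw [← ENNReal.ofReal_natCast, ← ENNReal.ofReal_ofNat 2,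
          ← ENNReal.ofReal_add (Nat.cast_nonneg m) zero_le_two]
        exact ENNReal.ofReal_le_ofReal (by linarith)

/-- Theorem 1(ii): the expected number of bits used by the bisection algorithm,
`Σ_{(ℓ,j) halting} ℓ·2^{-ℓ}`, is at most `3 + log₂⁺(L/(2ε))`. -/
theorem stmt0 (a b ε : ℝ) (hab : a < b) (hε : 0 < ε)
    (φ : ℝ → ℝ) (hmono : MonotoneOn φ (Set.Icc 0 1))
    (hmaps : Set.MapsTo φ (Set.Icc 0 1) (Set.Icc a b))
    (hφ0 : φ 0 = a) (hφ1 : φ 1 = b) :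
    ∑' u : {q : ℕ × ℕ // HaltingNode φ ε q.1 q.2}, ((u.1.1 : ℝ≥0∞) / 2 ^ u.1.1)
      ≤ ENNReal.ofReal (3 + max 0 (Real.logb 2 ((b - a) / (2 * ε)))) :=
  stmt0_general a b ε hε φ hmono hφ0 hφ1
end

section
/- Let L be a prefix-free set of finite binary strings and let I be the set of all proper prefixes of elements of L. If there is an integer m ≥ 1 such that for every ℓ ≥ 0 the number N_ℓ = #{v ∈ I : |v| = ℓ} satisfies N_ℓ ≤ m, then Σ_{u∈L} |u|·2^{−|u|} ≤ log₂(m) + 3. -/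
/-!
Write `∑_{u ∈ L} |u| 2^{-|u|} = ∑_ℓ B_ℓ` with `B_ℓ = ∑_{u ∈ L, |u| > ℓ} 2^{-|u|}`.
Kraft's inequality gives `B_ℓ ≤ 1`. Grouping the `u` counted in `B_ℓ` by their prefix of
length `ℓ`, which is an internal node, and applying Kraft's inequality in the subtree below
each such node gives `B_ℓ ≤ N_ℓ 2^{-ℓ} ≤ m 2^{-ℓ}`. Using the first bound for
`ℓ < k = ⌈log₂ m⌉` and the second one beyond, `∑_ℓ B_ℓ ≤ k + 2 ≤ log₂ m + 3`.
-/

open scoped ENNReal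

def PrefixFree {α : Type*} (S : Set (List α)) : Prop :=
  ∀ u ∈ S, ∀ v ∈ S, u <+: v → u = v

theorem PrefixFree.mono {α : Type*} {S T : Set (List α)} (hST : S ⊆ T) (hT : PrefixFree T) :
    PrefixFree S :=
  fun u hu v hv => hT u (hST hu) v (hST hv)

theorem List.IsPrefix.exists_append_singleton_prefix {α : Type*} {v u : List α} (h : v <+: u)
    (hne : v ≠ u) : ∃ b, v ++ [b] <+: u := by
  obtain ⟨_ | ⟨b, t⟩, rfl⟩ := h
  · simp at hne
  · exact ⟨b, t, by simp⟩

theorem ENNReal.inv_two_pow_succ_add_inv_two_pow_succ (n : ℕ) :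
    (2⁻¹ : ℝ≥0∞) ^ (n + 1) + 2⁻¹ ^ (n + 1) = 2⁻¹ ^ n := by
  rw [pow_succ, ← mul_add, ENNReal.inv_two_add_inv_two, mul_one]

theorem PrefixFree.sum_inv_two_pow_le_of_length_le {F : Finset (List Bool)}
    (hF : PrefixFree (F : Set (List Bool))) (n : ℕ) (v : List Bool)
    (hv : ∀ u ∈ F, v <+: u ∧ u.length ≤ v.length + n) :
    ∑ u ∈ F, (2⁻¹ : ℝ≥0∞) ^ u.length ≤ 2⁻¹ ^ v.length := by
  induction n generalizing F v with
  | zero =>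
    refine (Finset.sum_le_sum_of_subset fun u hu => ?_).trans_eq (Finset.sum_singleton _ v)
    exact Finset.mem_singleton.mpr ((hv u hu).1.eq_of_length_le (hv u hu).2).symm
  | succ n ih =>
    by_cases hvF : v ∈ F
    · refine (Finset.sum_le_sum_of_subset fun u hu => ?_).trans_eq (Finset.sum_singleton _ v)
      exact Finset.mem_singleton.mpr (hF v hvF u hu (hv u hu).1).symm
    have hchild (b : Bool) :
        ∑ u ∈ F with v ++ [b] <+: u, (2⁻¹ : ℝ≥0∞) ^ u.length ≤ 2⁻¹ ^ (v.length + 1) := by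
      have hsub : (↑(F.filter (v ++ [b] <+: ·)) : Set (List Bool)) ⊆ F :=
        Finset.coe_subset.mpr (Finset.filter_subset _ _)
      simpa using ih (hF.mono hsub) (v ++ [b]) fun u hu => by
        rw [Finset.mem_filter] at hu
        simpa [add_right_comm _ 1, add_assoc] using And.intro hu.2 (hv u hu.1).2
    calc ∑ u ∈ F, (2⁻¹ : ℝ≥0∞) ^ u.length
        ≤ ∑ u ∈ F with v ++ [true] <+: u, (2⁻¹ : ℝ≥0∞) ^ u.length +
            ∑ u ∈ F with v ++ [false] <+: u, (2⁻¹ : ℝ≥0∞) ^ u.length := by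
          rw [← Finset.sum_filter_add_sum_filter_not F (v ++ [true] <+: ·)]
          gcongr with u hu
          intro hnot
          obtain ⟨b, hb⟩ := (hv u hu).1.exists_append_singleton_prefix fun h => hvF (h ▸ hu)
          cases b
          · exact hb
          · exact absurd hb hnot
      _ ≤ 2⁻¹ ^ (v.length + 1) + 2⁻¹ ^ (v.length + 1) :=
        add_le_add (hchild true) (hchild false)
      _ = 2⁻¹ ^ v.length := ENNReal.inv_two_pow_succ_add_inv_two_pow_succ _

theorem PrefixFree.tsum_inv_two_pow_le {S : Set (List Bool)} (hS : PrefixFree S)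
    (v : List Bool) (hv : ∀ u ∈ S, v <+: u) :
    ∑' u : S, (2⁻¹ : ℝ≥0∞) ^ u.1.length ≤ 2⁻¹ ^ v.length := by
  rw [ENNReal.tsum_eq_iSup_sum]
  refine iSup_le fun s => ?_
  rw [← Finset.sum_image (f := fun u : List Bool => (2⁻¹ : ℝ≥0∞) ^ u.length)
    Subtype.val_injective.injOn]
  have hsS : (↑(s.image Subtype.val) : Set (List Bool)) ⊆ S := by simp
  exact (hS.mono hsS).sum_inv_two_pow_le_of_length_le (Finset.sup _ List.length) v fun u hu =>
    ⟨hv u (hsS hu), (Finset.le_sup hu).trans le_add_self⟩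

def internalNodesAt {α : Type*} (S : Set (List α)) (ℓ : ℕ) : Set (List α) :=
  {v | (∃ u ∈ S, v <+: u ∧ v ≠ u) ∧ v.length = ℓ}

theorem PrefixFree.tsum_inv_two_pow_le_encard_mul {S : Set (List Bool)} (hS : PrefixFree S)
    (ℓ : ℕ) :
    ∑' u : ↥(S ∩ {u | ℓ < u.length}), (2⁻¹ : ℝ≥0∞) ^ u.1.length ≤
      (internalNodesAt S ℓ).encard * 2⁻¹ ^ ℓ := by
  have hcover : S ∩ {u | ℓ < u.length} ⊆ ⋃ v ∈ internalNodesAt S ℓ, S ∩ {u | v <+: u} := by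
    rintro u ⟨huS, hlen⟩
    have htake : (u.take ℓ).length = ℓ := List.length_take_of_le hlen.le
    have hnode : u.take ℓ ∈ internalNodesAt S ℓ :=
      ⟨⟨u, huS, u.take_prefix ℓ, fun h => hlen.ne' (h ▸ htake)⟩, htake⟩
    exact Set.mem_biUnion hnode ⟨huS, u.take_prefix ℓ⟩
  calc ∑' u : ↥(S ∩ {u | ℓ < u.length}), (2⁻¹ : ℝ≥0∞) ^ u.1.length
      ≤ ∑' u : ↥(⋃ v ∈ internalNodesAt S ℓ, S ∩ {u | v <+: u}), (2⁻¹ : ℝ≥0∞) ^ u.1.length :=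
        ENNReal.tsum_mono_subtype (fun u : List Bool => (2⁻¹ : ℝ≥0∞) ^ u.length) hcover
    _ ≤ ∑' v : internalNodesAt S ℓ, ∑' u : ↥(S ∩ {u | v.1 <+: u}), (2⁻¹ : ℝ≥0∞) ^ u.1.length :=
        ENNReal.tsum_biUnion_le_tsum (fun u : List Bool => (2⁻¹ : ℝ≥0∞) ^ u.length) _ _
    _ ≤ ∑' _ : internalNodesAt S ℓ, (2⁻¹ : ℝ≥0∞) ^ ℓ := by
        refine ENNReal.tsum_le_tsum fun v => ?_
        refine ((hS.mono Set.inter_subset_left).tsum_inv_two_pow_le v fun u hu => hu.2).trans_eq ?_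
        rw [v.2.2]
    _ = (internalNodesAt S ℓ).encard * 2⁻¹ ^ ℓ := by
        rw [ENNReal.tsum_const, ENat.card_coe_set_eq]

theorem ENNReal.tsum_ite_lt_eq_natCast_mul (n : ℕ) (c : ℝ≥0∞) :
    ∑' ℓ : ℕ, (if ℓ < n then c else 0) = n * c := by
  rw [tsum_eq_sum (s := Finset.range n) fun ℓ hℓ => if_neg (by simpa using hℓ),
    Finset.sum_ite_of_true fun ℓ hℓ => Finset.mem_range.mp hℓ]
  simp

theorem ENNReal.tsum_natCast_mul_eq_tsum_tsum_setOf_lt {α : Type*} (S : Set α) (n : α → ℕ)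
    (f : α → ℝ≥0∞) :
    ∑' a : S, (n a : ℝ≥0∞) * f a = ∑' ℓ : ℕ, ∑' a : ↥(S ∩ {a | ℓ < n a}), f a := by
  rw [tsum_subtype S fun a => (n a : ℝ≥0∞) * f a]
  simp only [tsum_subtype (S ∩ _) f, ← Set.indicator_indicator]
  rw [ENNReal.tsum_comm]
  refine tsum_congr fun a => ?_
  by_cases ha : a ∈ S
  · simp only [ha, Set.indicator_of_mem]
    convert (ENNReal.tsum_ite_lt_eq_natCast_mul (n a) (f a)).symm using 2
    simp [Set.indicator_apply]
  · simp [ha]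

theorem ENNReal.tsum_le_add_two_of_le_one_of_le_mul_inv_two_pow {b : ℕ → ℝ≥0∞} {c : ℝ≥0∞}
    {k : ℕ} (hck : c ≤ 2 ^ k) (h_one : ∀ ℓ, b ℓ ≤ 1) (h_geom : ∀ ℓ, b ℓ ≤ c * 2⁻¹ ^ ℓ) :
    ∑' ℓ, b ℓ ≤ k + 2 := by
  rw [← ENNReal.summable.sum_add_tsum_nat_add' (k := k)]
  gcongr
  · simpa using Finset.sum_le_card_nsmul (Finset.range k) b 1 fun ℓ _ => h_one ℓ
  · calc ∑' j, b (j + k) ≤ ∑' j, c * 2⁻¹ ^ k * 2⁻¹ ^ j :=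
          ENNReal.tsum_le_tsum fun j => (h_geom (j + k)).trans_eq (by ring)
      _ = c * 2⁻¹ ^ k * 2 := by
          rw [ENNReal.tsum_mul_left, ENNReal.tsum_geometric, ENNReal.one_sub_inv_two, inv_inv]
      _ ≤ 2 ^ k * 2⁻¹ ^ k * 2 := by gcongr
      _ = 2 := by
          rw [← mul_pow, ENNReal.mul_inv_cancel two_ne_zero ENNReal.ofNat_ne_top, one_pow, one_mul]

theorem natCast_clog_two_add_two_le_ofReal_logb (m : ℕ) :
    (Nat.clog 2 m : ℝ≥0∞) + 2 ≤ ENNReal.ofReal (Real.logb 2 m + 3) := by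
  have hlog : 0 ≤ Real.logb 2 m :=
    div_nonneg (Real.log_natCast_nonneg m) (Real.log_nonneg one_le_two)
  have hclog : (Nat.clog 2 m : ℝ) < Real.logb 2 m + 1 := by
    have := Nat.ceil_lt_add_one hlog
    rwa [← Nat.cast_ofNat, Real.natCeil_logb_natCast] at this
  rw [show Real.logb 2 m + 3 = (Real.logb 2 m + 1) + 2 by ring,
    ENNReal.ofReal_add (by linarith) zero_le_two, ENNReal.ofReal_ofNat, ← ENNReal.ofReal_natCast]
  gcongr

theorem stmt4_general (L : Set (List Bool))
    (hpf : ∀ u ∈ L, ∀ v ∈ L, u <+: v → u = v)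
    (m : ℕ)
    (hN : ∀ ℓ : ℕ,
      {v : List Bool | (∃ u ∈ L, v <+: u ∧ v ≠ u) ∧ v.length = ℓ}.encard ≤ m) :
    ∑' u : L, (u.1.length : ℝ≥0∞) * (2 : ℝ≥0∞)⁻¹ ^ u.1.length ≤
      ENNReal.ofReal (Real.logb 2 m + 3) := by
  have hL : PrefixFree L := hpf
  have h_one (ℓ : ℕ) : ∑' u : ↥(L ∩ {u | ℓ < u.length}), (2⁻¹ : ℝ≥0∞) ^ u.1.length ≤ 1 :=
    calc _ ≤ ∑' u : L, (2⁻¹ : ℝ≥0∞) ^ u.1.length :=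
          ENNReal.tsum_mono_subtype (fun u : List Bool => 2⁻¹ ^ u.length) Set.inter_subset_left
      _ ≤ 2⁻¹ ^ ([] : List Bool).length := hL.tsum_inv_two_pow_le [] fun u _ => List.nil_prefix
      _ = 1 := pow_zero _
  have h_geom (ℓ : ℕ) :
      ∑' u : ↥(L ∩ {u | ℓ < u.length}), (2⁻¹ : ℝ≥0∞) ^ u.1.length ≤ m * 2⁻¹ ^ ℓ :=
    (hL.tsum_inv_two_pow_le_encard_mul ℓ).trans (by gcongr; exact_mod_cast hN ℓ)
  calc _ = ∑' ℓ : ℕ, ∑' u : ↥(L ∩ {u | ℓ < u.length}), (2⁻¹ : ℝ≥0∞) ^ u.1.length :=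
        ENNReal.tsum_natCast_mul_eq_tsum_tsum_setOf_lt L List.length fun u => 2⁻¹ ^ u.length
    _ ≤ (Nat.clog 2 m : ℝ≥0∞) + 2 :=
        ENNReal.tsum_le_add_two_of_le_one_of_le_mul_inv_two_pow
          (by exact_mod_cast Nat.le_pow_clog one_lt_two m) h_one h_geom
    _ ≤ _ := natCast_clog_two_add_two_le_ofReal_logb m

/-- If `L` is a prefix-free set of finite binary strings whose tree has at most `m`
internal nodes at every depth (`N_ℓ ≤ m` for all `ℓ`), then
`Σ_{u∈L} |u|·2^{-|u|} ≤ log₂(m) + 3`. -/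
theorem stmt4 (L : Set (List Bool))
    (hpf : ∀ u ∈ L, ∀ v ∈ L, u <+: v → u = v)
    (m : ℕ) (hm : 1 ≤ m)
    (hN : ∀ ℓ : ℕ,
      {v : List Bool | (∃ u ∈ L, v <+: u ∧ v ≠ u) ∧ v.length = ℓ}.encard ≤ m) :
    ∑' u : L, (u.1.length : ℝ≥0∞) * (2 : ℝ≥0∞)⁻¹ ^ u.1.length ≤
      ENNReal.ofReal (Real.logb 2 m + 3) :=
  stmt4_general L hpf m hN
end
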